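/- The initial row of the c-table is c_{0j}(n, α, β) = [(σ+1)_n (β+2)_n / (n! B(α+1, β+1))] · (-1)^j / ((α+1)_{n-j} (β+2)_j) for 0 ≤ j ≤ n, where σ = α+β+1. -/

import Mathlib

open Finset

/-- Pochhammer symbol `(c)_k = c (c+1) ⋯ (c+k-1)`. -/
noncomputable def poch (c : ℝ) (k : ℕ) : ℝ := ∏ j ∈ Finset.range k, (c + j)

/-- Bernstein polynomial `B^n_i(x)`. -/
noncomputable def bern (n i : ℕ) (x : ℝ) : ℝ := (n.choose i : ℝ) * x ^ i * (1 - x) ^ (n - i)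

/-- Jacobi inner product on [0,1]. -/
noncomputable def jip (α β : ℝ) (f g : ℝ → ℝ) : ℝ :=
  ∫ x in (0:ℝ)..1, (1 - x) ^ α * x ^ β * f x * g x

/-- Beta function `B(a,b) = Γ(a)Γ(b)/Γ(a+b)`. -/
noncomputable def betaF (a b : ℝ) : ℝ := Real.Gamma a * Real.Gamma b / Real.Gamma (a + b)

/-- Hahn polynomial `Q_m(x; α, β, N)` as a terminating ₃F₂ sum. -/
noncomputable def hahn (m : ℕ) (x : ℝ) (α β : ℝ) (N : ℕ) : ℝ :=
  ∑ k ∈ Finset.range (m + 1),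
    poch (-(m : ℝ)) k * poch ((m : ℝ) + α + β + 1) k * poch (-x) k /
      ((k.factorial : ℝ) * poch (α + 1) k * poch (-(N : ℝ)) k)

/-- Shifted Jacobi polynomial `R_m^{(α,β)}(x)`. -/
noncomputable def sjac (m : ℕ) (α β : ℝ) (x : ℝ) : ℝ :=
  (poch (α + 1) m / (m.factorial : ℝ)) *
    ∑ k ∈ Finset.range (m + 1),
      poch (-(m : ℝ)) k * poch ((m : ℝ) + α + β + 1) k /
        ((k.factorial : ℝ) * poch (α + 1) k) * (1 - x) ^ k

/-!
Both `c` and the claimed row solve the Gram system `∑ᵢ xᵢ ⟨Bᵢ, B_r⟩ = δ_{r0}` (`r ≤ n`). Its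
matrix is nonsingular: `⟨g, g⟩ = 0` forces `g = 0` on `(0,1)`, and the Bernstein polynomials are
independent there. The Gram entries are Beta integrals,
`⟨B_j, B_r⟩ ∝ (β+1)_{j+r} (α+1)_{2n-j-r} / (σ+1)_{2n}`. Inserting the claimed row turns each
equation into an alternating binomial sum `∑ⱼ (-1)ʲ C(n,j) f(j)`, i.e. an `n`-th forward
difference. For `r ≥ 1`, `f` is a polynomial of degree `< n`, so the sum vanishes; for `r = 0`,
`f(j) = p(j) / (β+1+j)` with `deg p ≤ n`, and `Δⁿ (1/t) = (-1)ⁿ n! / (t)_{n+1}` gives `1`.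
-/

open Polynomial

section Pochhammer

lemma poch_zero (c : ℝ) : poch c 0 = 1 := prod_range_zero _

lemma poch_succ (c : ℝ) (k : ℕ) : poch c (k + 1) = poch c k * (c + k) := prod_range_succ _ _

lemma poch_add (c : ℝ) (k m : ℕ) : poch c (k + m) = poch c k * poch (c + k) m := by
  simp only [poch, prod_range_add, Nat.cast_add, add_assoc]

lemma poch_succ_eq_mul (c : ℝ) (k : ℕ) : poch c (k + 1) = c * poch (c + 1) k := by
  rw [add_comm, poch_add]
  simp [poch]

lemma poch_pos {c : ℝ} (hc : 0 < c) (k : ℕ) : 0 < poch c k :=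
  prod_pos fun _ _ => by positivity

lemma poch_eq_eval_ascPochhammer (c : ℝ) (k : ℕ) : poch c k = (ascPochhammer ℝ k).eval c := by
  induction k with
  | zero => simp [poch_zero]
  | succ k ih => simp [poch_succ, ascPochhammer_succ_right, ih]

lemma exists_natDegree_le_eval_eq_poch (a b : ℝ) (m : ℕ) :
    ∃ P : ℝ[X], P.natDegree ≤ m ∧ ∀ t, P.eval t = poch (a + b * t) m := by
  refine ⟨(ascPochhammer ℝ m).comp (C a + C b * X), ?_, fun t => by
    simp [poch_eq_eval_ascPochhammer]⟩
  calc _ ≤ (ascPochhammer ℝ m).natDegree * (C a + C b * X).natDegree := natDegree_comp_le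
    _ ≤ m * 1 := by
        rw [ascPochhammer_natDegree]
        exact Nat.mul_le_mul_left _ (by compute_degree)
    _ = m := mul_one m

lemma Gamma_add_nat {c : ℝ} (hc : 0 < c) (k : ℕ) :
    Real.Gamma (c + k) = poch c k * Real.Gamma c := by
  induction k with
  | zero => simp [poch_zero]
  | succ k ih =>
    rw [Nat.cast_succ, ← add_assoc, Real.Gamma_add_one (by positivity), ih, poch_succ]
    ring

lemma betaF_add_nat {a b : ℝ} (ha : 0 < a) (hb : 0 < b) (p q : ℕ) :
    betaF (a + p) (b + q) = betaF a b * poch a p * poch b q / poch (a + b) (p + q) := by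
  have hΓ : Real.Gamma (a + b) ≠ 0 := (Real.Gamma_pos_of_pos (by positivity)).ne'
  have hpoch : poch (a + b) (p + q) ≠ 0 := (poch_pos (by positivity) _).ne'
  have hsum : a + p + (b + q) = a + b + ((p + q : ℕ) : ℝ) := by push_cast; ring
  rw [betaF, betaF, hsum, Gamma_add_nat ha, Gamma_add_nat hb, Gamma_add_nat (by positivity)]
  field_simp

end Pochhammer

section AlternatingSums

lemma sum_alternating_choose_mul_eq_fwdDiff (f : ℝ → ℝ) (n : ℕ) :
    ∑ j ∈ range (n + 1), (-1 : ℝ) ^ j * n.choose j * f j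
      = (-1) ^ n * (fwdDiff 1)^[n] f 0 := by
  rw [fwdDiff_iter_eq_sum_shift, mul_sum]
  refine sum_congr rfl fun j hj => ?_
  obtain ⟨k, rfl⟩ := Nat.exists_eq_add_of_le (mem_range_succ_iff.mp hj)
  have hsign : (-1 : ℝ) ^ (j + k) * (-1) ^ k = (-1) ^ j := by
    rw [pow_add, mul_assoc, ← mul_pow]
    simp
  simp [zsmul_eq_mul, ← hsign, mul_assoc]

lemma fwdDiff_iter_inv {y : ℝ} (hy : 0 < y) (n : ℕ) :
    (fwdDiff 1)^[n] (fun t : ℝ => t⁻¹) y = (-1) ^ n * n.factorial / poch y (n + 1) := by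
  induction n generalizing y with
  | zero => simp [poch_succ, poch_zero]
  | succ n ih =>
    rw [Function.iterate_succ_apply', fwdDiff, ih (by linarith), ih hy,
      poch_succ_eq_mul y (n + 1), poch_succ (y + 1) n, poch_succ_eq_mul y n, Nat.factorial_succ]
    have : 0 < poch (y + 1) n := poch_pos (by linarith) _
    have : y + 1 + n ≠ 0 := by positivity
    push_cast
    field_simp
    ring

lemma sum_alternating_choose_div {x : ℝ} (hx : 0 < x) (n : ℕ) :
    ∑ j ∈ range (n + 1), (-1 : ℝ) ^ j * n.choose j / (x + j)
      = n.factorial / poch x (n + 1) := by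
  have := sum_alternating_choose_mul_eq_fwdDiff (fun t => (t + x)⁻¹) n
  rw [fwdDiff_iter_comp_add (f := fun t : ℝ => t⁻¹), zero_add, fwdDiff_iter_inv hx,
    ← mul_div_assoc, ← mul_assoc, ← pow_add, ← two_mul, pow_mul] at this
  simpa [div_eq_mul_inv, add_comm _ x] using this

lemma sum_alternating_choose_mul_eval_eq_zero {P : ℝ[X]} {n : ℕ} (hP : P.degree < n) :
    ∑ j ∈ range (n + 1), (-1 : ℝ) ^ j * n.choose j * P.eval (j : ℝ) = 0 := by
  rcases eq_or_ne P 0 with rfl | hP0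
  · simp
  rw [sum_alternating_choose_mul_eq_fwdDiff (fun t => P.eval t),
    fwdDiff_iter_eq_zero_of_degree_lt ((natDegree_lt_iff_degree_lt hP0).mpr hP)]
  simp

lemma sum_alternating_choose_mul_eval_div {P : ℝ[X]} {n : ℕ} (hP : P.natDegree ≤ n) {x : ℝ}
    (hx : 0 < x) :
    ∑ j ∈ range (n + 1), (-1 : ℝ) ^ j * n.choose j * P.eval (j : ℝ) / (x + j)
      = P.eval (-x) * n.factorial / poch x (n + 1) := by
  -- `P = P(-x) + (X + x) Q` with `deg Q < n`, and the alternating sum kills `Q`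
  set Q := (P - C (P.eval (-x))) /ₘ (X - C (-x))
  have hdiv : (X - C (-x)) * Q = P - C (P.eval (-x)) :=
    mul_divByMonic_eq_iff_isRoot.mpr (by simp)
  have hQ : Q.degree < n := by
    rcases eq_or_ne Q 0 with hQ0 | hQ0
    · simp [hQ0]
    have hdeg := congrArg natDegree hdiv
    rw [natDegree_mul (X_sub_C_ne_zero _) hQ0, natDegree_X_sub_C, natDegree_sub_C] at hdeg
    rw [degree_eq_natDegree hQ0]
    exact_mod_cast (by omega : Q.natDegree < n)
  have hsplit : ∀ j ∈ range (n + 1), (-1 : ℝ) ^ j * n.choose j * P.eval (j : ℝ) / (x + j)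
      = P.eval (-x) * ((-1) ^ j * n.choose j / (x + j))
        + (-1) ^ j * n.choose j * Q.eval (j : ℝ) := by
    intro j _
    have hj : x + j ≠ 0 := by positivity
    have hPj : P.eval (j : ℝ) = P.eval (-x) + (x + j) * Q.eval (j : ℝ) := by
      have := congrArg (eval (j : ℝ)) hdiv
      simp only [eval_mul, eval_sub, eval_X, eval_C] at this
      linear_combination -this
    rw [hPj]
    field_simp
  rw [sum_congr rfl hsplit, sum_add_distrib, ← mul_sum, sum_alternating_choose_div hx,
    sum_alternating_choose_mul_eval_eq_zero hQ]
  ring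

end AlternatingSums

open MeasureTheory Set

section BetaIntegral

lemma ofReal_rpow_mul_one_sub_rpow {a b x : ℝ} (hx : x ∈ Icc (0 : ℝ) 1) :
    ((x ^ a * (1 - x) ^ b : ℝ) : ℂ)
      = (x : ℂ) ^ ((a + 1 : ℂ) - 1) * (1 - (x : ℂ)) ^ ((b + 1 : ℂ) - 1) := by
  rw [Complex.ofReal_mul, Complex.ofReal_cpow hx.1, Complex.ofReal_cpow (sub_nonneg.mpr hx.2)]
  push_cast
  ring_nf

lemma intervalIntegrable_rpow_mul_one_sub_rpow {a b : ℝ} (ha : -1 < a) (hb : -1 < b) :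
    IntervalIntegrable (fun x : ℝ => x ^ a * (1 - x) ^ b) volume 0 1 := by
  have h := (Complex.betaIntegral_convergent (u := a + 1) (v := b + 1)
    (by simp; linarith) (by simp; linarith)).norm
  refine h.congr fun x hx => ?_
  rw [uIoc_of_le zero_le_one] at hx
  have hx' : x ∈ Icc (0 : ℝ) 1 := Ioc_subset_Icc_self hx
  rw [← ofReal_rpow_mul_one_sub_rpow hx', Complex.norm_real, Real.norm_of_nonneg]
  exact mul_nonneg (Real.rpow_nonneg hx'.1 _) (Real.rpow_nonneg (sub_nonneg.mpr hx'.2) _)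

lemma integral_rpow_mul_one_sub_rpow {a b : ℝ} (ha : -1 < a) (hb : -1 < b) :
    ∫ x in (0 : ℝ)..1, x ^ a * (1 - x) ^ b = betaF (a + 1) (b + 1) := by
  have hbeta := ProbabilityTheory.beta_eq_betaIntegralReal (a + 1) (b + 1)
    (by linarith) (by linarith)
  rw [Complex.betaIntegral, ← intervalIntegral.integral_ofReal.symm.trans
    (intervalIntegral.integral_congr fun x hx => ?_)] at hbeta
  · exact (Complex.ofReal_re _).symm.trans hbeta.symm
  · rw [Set.uIcc_of_le zero_le_one] at hx
    simpa using ofReal_rpow_mul_one_sub_rpow hx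

end BetaIntegral

section JacobiInnerProduct

variable {α β : ℝ}

lemma jip_comm (f g : ℝ → ℝ) : jip α β f g = jip α β g f := by
  simp only [jip, mul_right_comm _ (f _)]

lemma intervalIntegrable_weight_mul (hα : -1 < α) (hβ : -1 < β) {f : ℝ → ℝ}
    (hf : Continuous f) :
    IntervalIntegrable (fun x => (1 - x) ^ α * x ^ β * f x) volume 0 1 := by
  simpa only [mul_comm (_ ^ β)] using
    (intervalIntegrable_rpow_mul_one_sub_rpow hβ hα).mul_continuousOn hf.continuousOn

lemma jip_sum_mul_left (hα : -1 < α) (hβ : -1 < β) {ι : Type*} (s : Finset ι) (u : ι → ℝ)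
    {f : ι → ℝ → ℝ} (hf : ∀ i, Continuous (f i)) {g : ℝ → ℝ} (hg : Continuous g) :
    jip α β (fun x => ∑ i ∈ s, u i * f i x) g = ∑ i ∈ s, u i * jip α β (f i) g := by
  have hint : ∀ i ∈ s, IntervalIntegrable
      (fun x => u i * ((1 - x) ^ α * x ^ β * f i x * g x)) volume 0 1 := fun i _ => by
    simpa only [mul_assoc] using (intervalIntegrable_weight_mul hα hβ
      (f := fun x => f i x * g x) ((hf i).mul hg)).const_mul (u i)
  simp only [jip, ← intervalIntegral.integral_const_mul,
    ← intervalIntegral.integral_finsetSum hint]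
  congr 1 with x
  rw [mul_sum, sum_mul]
  exact sum_congr rfl fun i _ => by ring

lemma eqOn_zero_of_jip_self_eq_zero (hα : -1 < α) (hβ : -1 < β) {g : ℝ → ℝ}
    (hg : Continuous g) (h : jip α β g g = 0) : EqOn g 0 (Ioo 0 1) := by
  set F := fun x : ℝ => (1 - x) ^ α * x ^ β * (g x * g x)
  have hF_int : IntervalIntegrable F volume 0 1 := intervalIntegrable_weight_mul hα hβ (hg.mul hg)
  have hF_nonneg : ∀ x ∈ Ioc (0 : ℝ) 1, 0 ≤ F x := fun x hx =>
    mul_nonneg (mul_nonneg (Real.rpow_nonneg (sub_nonneg.mpr hx.2) _)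
      (Real.rpow_nonneg hx.1.le _)) (mul_self_nonneg _)
  have hF_ae : F =ᵐ[volume.restrict (Ioc 0 1)] 0 := by
    refine (intervalIntegral.integral_eq_zero_iff_of_le_of_nonneg_ae zero_le_one
      (ae_restrict_of_forall_mem measurableSet_Ioc hF_nonneg) hF_int).mp ?_
    simpa only [F, jip, mul_assoc] using h
  have hF_cont : ContinuousOn F (Ioo 0 1) := by
    refine ContinuousOn.mul (ContinuousOn.mul ?_ ?_) (hg.mul hg).continuousOn
    · exact (continuousOn_const.sub continuousOn_id).rpow_const fun x hx =>
        Or.inl (sub_ne_zero.mpr hx.2.ne')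
    · exact continuousOn_id.rpow_const fun x hx => Or.inl hx.1.ne'
  have hF_zero : EqOn F 0 (Ioo 0 1) := Measure.eqOn_open_of_ae_eq
    (ae_restrict_of_ae_restrict_of_subset Ioo_subset_Ioc_self hF_ae) isOpen_Ioo hF_cont
    continuousOn_const
  intro x hx
  have hw : (1 - x) ^ α * x ^ β ≠ 0 :=
    (mul_pos (Real.rpow_pos_of_pos (sub_pos.mpr hx.2) _) (Real.rpow_pos_of_pos hx.1 _)).ne'
  simpa [F, hw] using hF_zero hx

lemma rpow_mul_pow_of_nonneg {x a : ℝ} (hx : 0 ≤ x) (ha : -1 < a) (k : ℕ) :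
    x ^ a * x ^ k = x ^ (a + k) := by
  rcases Nat.eq_zero_or_pos k with rfl | hk
  · simp
  · have : (1 : ℝ) ≤ k := by exact_mod_cast hk
    exact (Real.rpow_add_natCast' hx (by linarith : 0 < a + k).ne').symm

lemma jip_bern_bern (hα : -1 < α) (hβ : -1 < β) {n j r : ℕ} (hj : j ≤ n) (hr : r ≤ n) :
    jip α β (bern n j) (bern n r) = n.choose j * n.choose r *
      (betaF (α + 1) (β + 1) * poch (β + 1) (j + r) * poch (α + 1) ((n - j) + (n - r)) /
        poch (α + β + 2) (2 * n)) := by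
  have hintegrand : EqOn (fun x => (1 - x) ^ α * x ^ β * bern n j x * bern n r x)
      (fun x => n.choose j * n.choose r *
        (x ^ (β + ↑(j + r)) * (1 - x) ^ (α + ↑((n - j) + (n - r))))) (uIcc 0 1) := by
    intro x hx
    rw [Set.uIcc_of_le zero_le_one] at hx
    dsimp only
    rw [← rpow_mul_pow_of_nonneg hx.1 hβ, ← rpow_mul_pow_of_nonneg (sub_nonneg.mpr hx.2) hα]
    simp only [bern, pow_add]
    ring
  have hbeta := betaF_add_nat (a := β + 1) (b := α + 1) (by linarith) (by linarith) (j + r)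
    ((n - j) + (n - r))
  have hcomm : betaF (β + 1) (α + 1) = betaF (α + 1) (β + 1) := by
    rw [betaF, betaF, mul_comm, add_comm (β + 1)]
  rw [jip, intervalIntegral.integral_congr hintegrand, intervalIntegral.integral_const_mul,
    integral_rpow_mul_one_sub_rpow (lt_add_of_lt_of_nonneg hβ (Nat.cast_nonneg _))
      (lt_add_of_lt_of_nonneg hα (Nat.cast_nonneg _)), add_right_comm β, add_right_comm α, hbeta,
    hcomm, show j + r + (n - j + (n - r)) = 2 * n by omega,
    show β + 1 + (α + 1) = α + β + 2 by ring]

end JacobiInnerProduct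

section Bernstein

lemma continuous_bern (n i : ℕ) : Continuous (bern n i) := by
  unfold bern
  fun_prop

lemma eq_zero_of_sum_mul_bern_eqOn_zero {n : ℕ} {u : ℕ → ℝ}
    (h : EqOn (fun x => ∑ i ∈ range (n + 1), u i * bern n i x) 0 (Ioo 0 1)) {j : ℕ}
    (hj : j ≤ n) : u j = 0 := by
  set R : ℝ[X] := ∑ i ∈ range (n + 1), C (u i * n.choose i) * X ^ i
  -- with `x = t / (1 + t)`, `bern n i x = (n choose i) t ^ i (1 - x) ^ n`
  have hroot : ∀ t : ℝ, 0 < t → R.eval t = 0 := by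
    intro t ht
    set x := t / (1 + t)
    have h1x : 1 - x = (1 + t)⁻¹ := by
      simp only [x]
      field_simp
      ring
    have hx : x = t * (1 - x) := by rw [h1x]; rfl
    have hx01 : x ∈ Ioo (0 : ℝ) 1 := ⟨by positivity, by rw [← sub_pos, h1x]; positivity⟩
    have hsum : ∑ i ∈ range (n + 1), u i * bern n i x = (1 - x) ^ n * R.eval t := by
      simp only [R, eval_finsetSum, eval_mul, eval_C, eval_pow, eval_X, mul_sum]
      refine sum_congr rfl fun i hi => ?_
      have hxi : x ^ i = t ^ i * (1 - x) ^ i := by rw [← mul_pow, ← hx]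
      rw [bern, hxi, ← Nat.add_sub_cancel' (mem_range_succ_iff.mp hi), pow_add,
        Nat.add_sub_cancel_left]
      ring
    have h1x0 : (1 - x) ^ n ≠ 0 := pow_ne_zero _ (sub_pos.mpr hx01.2).ne'
    simpa [h1x0] using hsum.symm.trans (h hx01)
  have hR : R = 0 := eq_zero_of_infinite_isRoot R
    ((Ioi_infinite 0).mono fun t ht => hroot t ht)
  have hcoeff : R.coeff j = u j * n.choose j := by
    rw [finsetSum_coeff]
    simp only [coeff_C_mul_X_pow]
    rw [sum_ite_eq, if_pos (mem_range_succ_iff.mpr hj)]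
  rw [hR, coeff_zero, eq_comm, mul_eq_zero] at hcoeff
  exact hcoeff.resolve_right (by exact_mod_cast (Nat.choose_pos hj).ne')

lemma eq_zero_of_sum_mul_jip_bern_eq_zero {α β : ℝ} (hα : -1 < α) (hβ : -1 < β) {n : ℕ}
    {u : ℕ → ℝ}
    (h : ∀ r ≤ n, ∑ i ∈ range (n + 1), u i * jip α β (bern n i) (bern n r) = 0) {j : ℕ} (hj : j ≤ n) : u j = 0 := by
  have hg : Continuous fun x => ∑ i ∈ range (n + 1), u i * bern n i x := by
    have := continuous_bern n
    fun_prop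
  refine eq_zero_of_sum_mul_bern_eqOn_zero (eqOn_zero_of_jip_self_eq_zero hα hβ hg ?_) hj
  rw [jip_sum_mul_left hα hβ _ _ (continuous_bern n) hg]
  refine sum_eq_zero fun r hr => ?_
  rw [jip_comm, jip_sum_mul_left hα hβ _ _ (continuous_bern n) (continuous_bern n r),
    h r (mem_range_succ_iff.mp hr), mul_zero]

end Bernstein

section InitialRow

noncomputable def initialRowCoeff (α β : ℝ) (n j : ℕ) : ℝ :=
  (poch (α + β + 2) n * poch (β + 2) n / ((n.factorial : ℝ) * betaF (α + 1) (β + 1))) *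
    ((-1 : ℝ) ^ j / (poch (α + 1) (n - j) * poch (β + 2) j))

variable {α β : ℝ}

lemma sum_alternating_poch_zero (hβ : -1 < β) (α : ℝ) (n : ℕ) :
    ∑ j ∈ range (n + 1), (-1 : ℝ) ^ j * n.choose j *
        (poch (β + 1) j / poch (β + 2) j * poch (α + 1 + ↑(n - j)) n)
      = n.factorial * poch (α + β + 2 + n) n / poch (β + 2) n := by
  obtain ⟨P, hPdeg, hPeval⟩ := exists_natDegree_le_eval_eq_poch (α + 1 + n) (-1) n
  have hβ1 : 0 < β + 1 := by linarith
  have hterm : ∀ j ∈ range (n + 1), (-1 : ℝ) ^ j * n.choose j *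
      (poch (β + 1) j / poch (β + 2) j * poch (α + 1 + ↑(n - j)) n)
        = (β + 1) * ((-1) ^ j * n.choose j * P.eval (j : ℝ) / (β + 1 + j)) := by
    intro j hj
    have hratio : poch (β + 1) j / poch (β + 2) j = (β + 1) / (β + 1 + j) := by
      rw [div_eq_div_iff (poch_pos (by linarith) j).ne' (by positivity), ← poch_succ,
        poch_succ_eq_mul, add_assoc, one_add_one_eq_two]
    rw [hratio, hPeval, Nat.cast_sub (mem_range_succ_iff.mp hj)]
    ring_nf
  rw [sum_congr rfl hterm, ← mul_sum, sum_alternating_choose_mul_eval_div hPdeg hβ1, hPeval,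
    poch_succ_eq_mul, add_assoc β 1 1, one_add_one_eq_two]
  have : poch (β + 2) n ≠ 0 := (poch_pos (by linarith) n).ne'
  field_simp
  ring_nf

lemma sum_alternating_poch_succ (hβ : -1 < β) (α : ℝ) {n s : ℕ} (hs : s + 1 ≤ n) :
    ∑ j ∈ range (n + 1), (-1 : ℝ) ^ j * n.choose j *
        (poch (β + 1) (j + (s + 1)) / poch (β + 2) j * poch (α + 1 + ↑(n - j)) (n - (s + 1)))
      = 0 := by
  obtain ⟨P₁, hP₁deg, hP₁eval⟩ := exists_natDegree_le_eval_eq_poch (β + 2) 1 s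
  obtain ⟨P₂, hP₂deg, hP₂eval⟩ :=
    exists_natDegree_le_eval_eq_poch (α + 1 + n) (-1) (n - (s + 1))
  have hdeg : (P₁ * P₂).degree < n := by
    have : (P₁ * P₂).natDegree < n :=
      (natDegree_mul_le.trans (add_le_add hP₁deg hP₂deg)).trans_lt (by omega)
    exact degree_le_natDegree.trans_lt (by exact_mod_cast this)
  have hterm : ∀ j ∈ range (n + 1), (-1 : ℝ) ^ j * n.choose j *
      (poch (β + 1) (j + (s + 1)) / poch (β + 2) j * poch (α + 1 + ↑(n - j)) (n - (s + 1)))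
        = (β + 1) * ((-1) ^ j * n.choose j * (P₁ * P₂).eval (j : ℝ)) := by
    intro j hj
    have hratio :
        poch (β + 1) (j + (s + 1)) / poch (β + 2) j = (β + 1) * poch (β + 2 + j) s := by
      rw [div_eq_iff (poch_pos (by linarith) j).ne', ← add_assoc, poch_succ_eq_mul, add_assoc β,
        one_add_one_eq_two, poch_add]
      ring
    rw [hratio, eval_mul, hP₁eval, hP₂eval, Nat.cast_sub (mem_range_succ_iff.mp hj)]
    ring_nf
  rw [sum_congr rfl hterm, ← mul_sum, sum_alternating_choose_mul_eval_eq_zero hdeg, mul_zero]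

lemma sum_initialRowCoeff_mul_jip_bern (hα : -1 < α) (hβ : -1 < β) {n r : ℕ} (hr : r ≤ n) :
    ∑ j ∈ range (n + 1), initialRowCoeff α β n j * jip α β (bern n j) (bern n r)
      = if r = 0 then 1 else 0 := by
  have hα1 : 0 < α + 1 := by linarith
  have hβ1 : 0 < β + 1 := by linarith
  have hσ : 0 < α + β + 2 := by linarith
  have hB : betaF (α + 1) (β + 1) ≠ 0 := (ProbabilityTheory.beta_pos hα1 hβ1).ne'
  have hσ2n : poch (α + β + 2) (2 * n) ≠ 0 := (poch_pos hσ _).ne'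
  have hterm : ∀ j ∈ range (n + 1), initialRowCoeff α β n j * jip α β (bern n j) (bern n r)
      = poch (α + β + 2) n * poch (β + 2) n * n.choose r /
          (n.factorial * poch (α + β + 2) (2 * n)) *
        ((-1 : ℝ) ^ j * n.choose j *
          (poch (β + 1) (j + r) / poch (β + 2) j * poch (α + 1 + ↑(n - j)) (n - r))) := by
    intro j hj
    have : poch (α + 1) (n - j) ≠ 0 := (poch_pos hα1 _).ne'
    have : poch (β + 2) j ≠ 0 := (poch_pos (by linarith) _).ne'
    rw [initialRowCoeff, jip_bern_bern hα hβ (mem_range_succ_iff.mp hj) hr, poch_add (α + 1)]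
    field_simp
  rw [sum_congr rfl hterm, ← mul_sum]
  rcases r with _ | s
  · simp only [add_zero, Nat.sub_zero, Nat.choose_zero_right, Nat.cast_one, if_true]
    rw [sum_alternating_poch_zero hβ, two_mul, poch_add]
    have : poch (β + 2) n ≠ 0 := (poch_pos (by linarith) n).ne'
    have : poch (α + β + 2) n ≠ 0 := (poch_pos hσ n).ne'
    have : poch (α + β + 2 + n) n ≠ 0 := (poch_pos (by positivity) n).ne'
    field_simp
  · rw [sum_alternating_poch_succ hβ α hr, mul_zero, if_neg (Nat.succ_ne_zero s)]

end InitialRow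

theorem bezier_coefficients_initial_row_general (α β : ℝ) (hα : α > -1) (hβ : β > -1)
    (n : ℕ) (D : Polynomial ℝ)
    (hdual : ∀ r ≤ n, jip α β (fun x => D.eval x) (bern n r) = if r = 0 then 1 else 0)
    (c : ℕ → ℝ)
    (hc : ∀ x : ℝ, D.eval x = ∑ r ∈ Finset.range (n + 1), c r * bern n r x)
    (j : ℕ) (hj : j ≤ n) :
    c j =
      (poch (α + β + 2) n * poch (β + 2) n / ((n.factorial : ℝ) * betaF (α + 1) (β + 1))) *
        ((-1 : ℝ) ^ j / (poch (α + 1) (n - j) * poch (β + 2) j)) := by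
  have hsys : ∀ r ≤ n, ∑ i ∈ range (n + 1),
      (c i - initialRowCoeff α β n i) * jip α β (bern n i) (bern n r) = 0 := by
    intro r hr
    simp only [sub_mul, sum_sub_distrib]
    rw [← jip_sum_mul_left hα hβ _ _ (continuous_bern n) (continuous_bern n r), ← funext hc,
      hdual r hr, sum_initialRowCoeff_mul_jip_bern hα hβ hr, sub_self]
  exact sub_eq_zero.mp (eq_zero_of_sum_mul_jip_bern_eq_zero hα hβ hsys hj)

theorem bezier_coefficients_initial_row (α β : ℝ) (hα : α > -1) (hβ : β > -1)
    (n : ℕ) (D : Polynomial ℝ) (hdeg : D.natDegree ≤ n)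
    (hdual : ∀ r ≤ n, jip α β (fun x => D.eval x) (bern n r) = if r = 0 then 1 else 0)
    (c : ℕ → ℝ)
    (hc : ∀ x : ℝ, D.eval x = ∑ r ∈ Finset.range (n + 1), c r * bern n r x)
    (j : ℕ) (hj : j ≤ n) :
    c j =
      (poch (α + β + 2) n * poch (β + 2) n / ((n.factorial : ℝ) * betaF (α + 1) (β + 1))) *
        ((-1 : ℝ) ^ j / (poch (α + 1) (n - j) * poch (β + 2) j)) :=
  bezier_coefficients_initial_row_general α β hα hβ n D hdual c hc j hj
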